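/- Scale-mixture representation of the Laplace prior: for every λ > 0 and every b ∈ ℝ, ∫_{t ∈ (0, ∞)} (2πt)^{−1/2} exp(−b²/(2t)) · (λ²/2) exp(−λ² t / 2) dt = (λ/2) exp(−λ|b|). That is, if β | τ² ∼ N(0, τ²) and τ² ∼ Exp(λ²/2), then the marginal density of β is the Laplace density with rate λ. -/

import Mathlib

/-!
Substituting `t = 2 s²` and completing the square in the exponent turns the integrand into
`(λ² / √π) e^{-λ|b|} exp (-(λ s - |b| / (2 s))²)`, which leaves the Cauchy–Schlömilch integral
`∫₀^∞ exp (-(α s - β / s)²) ds = √π / (2 α)`. The involution `s ↦ β / (α s)` of `(0, ∞)`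
preserves `exp (-(α s - β / s)²)` and turns `ds` into `β / (α s²) ds`, so twice `α` times that
integral equals `∫₀^∞ (α + β / s²) exp (-(α s - β / s)²) ds`. Finally `v = α s - β / s` maps
`(0, ∞)` bijectively onto `ℝ` with `dv = (α + β / s²) ds`, which leaves the Gaussian integral
`∫ exp (-v²) dv = √π`.
-/

open Real MeasureTheory Set

theorem div_right_injective₀ {G₀ : Type*} [GroupWithZero G₀] {b : G₀} (hb : b ≠ 0) :
    Function.Injective fun a : G₀ => b / a :=
  fun s t (h : b / s = b / t) => by
    rwa [div_eq_mul_inv, div_eq_mul_inv, mul_right_inj' hb, inv_inj] at h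

theorem image_const_div_Ioi_zero {K : Type*} [Field K] [LinearOrder K] [IsStrictOrderedRing K]
    {c : K} (hc : 0 < c) : (c / ·) '' Ioi 0 = Ioi 0 := by
  refine Subset.antisymm (image_subset_iff.2 fun s hs => div_pos hc hs) fun t ht => ?_
  exact ⟨c / t, div_pos hc ht, div_div_cancel₀ hc.ne'⟩

theorem hasDerivAt_const_div {𝕜 : Type*} [NontriviallyNormedField 𝕜] (c : 𝕜) {x : 𝕜}
    (hx : x ≠ 0) : HasDerivAt (c / ·) (-(c / x ^ 2)) x := by
  simpa [div_eq_mul_inv] using (hasDerivAt_inv hx).const_mul c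

theorem image_mul_sub_div_Ioi_zero {α β : ℝ} (hα : 0 < α) (hβ : 0 < β) :
    (fun s => α * s - β / s) '' Ioi 0 = univ := by
  refine eq_univ_of_forall fun v => ?_
  set r := √(v ^ 2 + 4 * α * β)
  have hr : r ^ 2 = v ^ 2 + 4 * α * β := sq_sqrt (by positivity)
  have hvr : |v| < r := by
    rw [← sqrt_sq_eq_abs]; exact sqrt_lt_sqrt (sq_nonneg v) (by nlinarith [mul_pos hα hβ])
  -- the positive root of `α s² - v s - β`
  set s := (v + r) / (2 * α)
  have hs : 0 < s := div_pos (by linarith [neg_abs_le v]) (by positivity)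
  have hroot : α * s ^ 2 - v * s - β = 0 := by
    simp only [s]; field_simp; linear_combination hr
  refine ⟨s, hs, ?_⟩
  field_simp
  linear_combination hroot

theorem strictMonoOn_mul_sub_div {K : Type*} [Field K] [LinearOrder K] [IsStrictOrderedRing K]
    {α β : K} (hα : 0 < α) (hβ : 0 < β) : StrictMonoOn (fun s => α * s - β / s) (Ioi 0) :=
  fun s hs t _ hst => by
    have := div_lt_div_of_pos_left hβ hs hst
    dsimp only
    nlinarith

section ChangeOfVariables

variable {E : Type*} [NormedAddCommGroup E] [NormedSpace ℝ E]

theorem integral_Ioi_comp_const_div (g : ℝ → E) {c : ℝ} (hc : 0 < c) :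
    ∫ s in Ioi 0, (c / s ^ 2) • g (c / s) = ∫ s in Ioi 0, g s := by
  have h := integral_image_eq_integral_abs_deriv_smul measurableSet_Ioi
    (fun s hs => (hasDerivAt_const_div c (ne_of_gt hs)).hasDerivWithinAt)
    (div_right_injective₀ hc.ne').injOn g
  simpa [image_const_div_Ioi_zero hc, abs_div, abs_of_pos hc] using h.symm

theorem integrableOn_Ioi_comp_const_div_iff (g : ℝ → E) {c : ℝ} (hc : 0 < c) :
    IntegrableOn (fun s => (c / s ^ 2) • g (c / s)) (Ioi 0) ↔ IntegrableOn g (Ioi 0) := by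
  have h := integrableOn_image_iff_integrableOn_abs_deriv_smul measurableSet_Ioi
    (fun s hs => (hasDerivAt_const_div c (ne_of_gt hs)).hasDerivWithinAt)
    (div_right_injective₀ hc.ne').injOn g
  simpa [image_const_div_Ioi_zero hc, abs_div, abs_of_pos hc] using h.symm

theorem integral_Ioi_comp_mul_sub_div (g : ℝ → E) {α β : ℝ} (hα : 0 < α) (hβ : 0 < β) :
    ∫ s in Ioi 0, (α + β / s ^ 2) • g (α * s - β / s) = ∫ v, g v := by
  have hderiv (s : ℝ) (hs : s ∈ Ioi 0) :
      HasDerivWithinAt (fun s => α * s - β / s) (α + β / s ^ 2) (Ioi 0) s := by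
    simpa using ((hasDerivAt_const_mul α).fun_sub (hasDerivAt_const_div β (ne_of_gt hs)))
      |>.hasDerivWithinAt
  have h := integral_image_eq_integral_abs_deriv_smul measurableSet_Ioi hderiv
    (strictMonoOn_mul_sub_div hα hβ).injOn g
  have habs (s : ℝ) : |α + β / s ^ 2| = α + β / s ^ 2 := abs_of_pos (by positivity)
  simpa only [image_mul_sub_div_Ioi_zero hα hβ, Measure.restrict_univ, habs] using h.symm

theorem integral_Ioi_comp_const_mul_sq (g : ℝ → E) {c : ℝ} (hc : 0 < c) :
    ∫ s in Ioi 0, (2 * c * s) • g (c * s ^ 2) = ∫ t in Ioi 0, g t := by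
  have h := integral_comp_rpow_Ioi_of_pos (g := fun u => g (c * u)) two_pos
  norm_num [rpow_two] at h
  have hsmul (s : ℝ) : (2 * c * s) • g (c * s ^ 2) = c • (2 * s) • g (c * s ^ 2) := by
    rw [smul_smul]; ring_nf
  simp_rw [hsmul, integral_smul, h, integral_comp_mul_left_Ioi g 0 hc, mul_zero,
    smul_inv_smul₀ hc.ne']

end ChangeOfVariables

theorem integrableOn_exp_neg_sq_mul_sub_div {α : ℝ} (hα : 0 < α) (β : ℝ) :
    IntegrableOn (fun s => exp (-(α * s - β / s) ^ 2)) (Ioi 0) := by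
  refine Integrable.mono' ((integrable_exp_neg_mul_sq (pow_pos hα 2)).const_mul (exp (2 * α * β))
    |>.integrableOn) (by fun_prop) ?_
  filter_upwards [ae_restrict_mem measurableSet_Ioi] with s (hs : 0 < s)
  rw [norm_of_nonneg (exp_nonneg _), ← exp_add, exp_le_exp]
  have : α * s * (β / s) = α * β := by field_simp
  nlinarith [sq_nonneg (β / s)]

theorem integral_exp_neg_sq_mul_sub_div {α β : ℝ} (hα : 0 < α) (hβ : 0 ≤ β) :
    ∫ s in Ioi 0, exp (-(α * s - β / s) ^ 2) = √π / (2 * α) := by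
  rcases hβ.eq_or_lt with rfl | hβ
  · simp_rw [zero_div, sub_zero, mul_pow, ← neg_mul, integral_gaussian_Ioi, sqrt_div pi_pos.le,
      sqrt_sq hα.le]
    ring
  set f := fun s => exp (-(α * s - β / s) ^ 2)
  have hf := integrableOn_exp_neg_sq_mul_sub_div hα β
  have hf_comp (s : ℝ) : f (β / α / s) = f s := by
    rcases eq_or_ne s 0 with rfl | hs
    · simp
    have : α * (β / α / s) - β / (β / α / s) = -(α * s - β / s) := by field_simp; ring
    simp only [f, this, neg_sq]
  have hf_recip : IntegrableOn (fun s => (β / α / s ^ 2) * f s) (Ioi 0) := by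
    simpa only [hf_comp, smul_eq_mul] using
      (integrableOn_Ioi_comp_const_div_iff f (div_pos hβ hα)).2 hf
  have h_recip : ∫ s in Ioi 0, (β / α / s ^ 2) * f s = ∫ s in Ioi 0, f s := by
    simpa only [hf_comp, smul_eq_mul] using integral_Ioi_comp_const_div f (div_pos hβ hα)
  have h_split (s : ℝ) : (α + β / s ^ 2) * f s = α * f s + α * ((β / α / s ^ 2) * f s) := by
    field_simp
  have h_gauss : ∫ s in Ioi 0, (α + β / s ^ 2) * f s = √π := by
    have := integral_gaussian 1
    simp only [neg_mul, one_mul, div_one] at this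
    rw [← this, ← integral_Ioi_comp_mul_sub_div _ hα hβ]
    rfl
  rw [eq_div_iff (by positivity), ← h_gauss, funext h_split,
    integral_add (hf.const_mul α) (hf_recip.const_mul α), integral_const_mul, integral_const_mul,
    h_recip]
  ring

/-- Scale-mixture representation of the Laplace prior: if `β | τ² ∼ N(0, τ²)`
and `τ² ∼ Exp(λ²/2)`, then the marginal density of `β` is the Laplace density
with rate `λ`:
`∫_{0}^{∞} (2πt)^{-1/2} exp(-b²/(2t)) (λ²/2) exp(-λ²t/2) dt = (λ/2) exp(-λ|b|)`. -/
theorem laplace_scale_mixture (lam b : ℝ) (hlam : 0 < lam) :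
    ∫ t in Set.Ioi (0 : ℝ),
        (Real.sqrt (2 * Real.pi * t))⁻¹ * Real.exp (-b ^ 2 / (2 * t))
          * (lam ^ 2 / 2 * Real.exp (-lam ^ 2 * t / 2))
      = lam / 2 * Real.exp (-lam * |b|) := by
  have h_integrand (s : ℝ) (hs : s ∈ Ioi 0) :
      (2 * 2 * s) • ((√(2 * π * (2 * s ^ 2)))⁻¹ * exp (-b ^ 2 / (2 * (2 * s ^ 2)))
          * (lam ^ 2 / 2 * exp (-lam ^ 2 * (2 * s ^ 2) / 2)))
        = lam ^ 2 / √π * exp (-lam * |b|) * exp (-(lam * s - |b| / 2 / s) ^ 2) := by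
    have hs : 0 < s := hs
    have hsqrt : √(2 * π * (2 * s ^ 2)) = 2 * s * √π := by
      rw [show 2 * π * (2 * s ^ 2) = (2 * s * √π) ^ 2 by rw [mul_pow, sq_sqrt pi_pos.le]; ring,
        sqrt_sq (by positivity)]
    have hexp : -lam * |b| + -(lam * s - |b| / 2 / s) ^ 2
        = -b ^ 2 / (2 * (2 * s ^ 2)) + -lam ^ 2 * (2 * s ^ 2) / 2 := by
      field_simp
      rw [← sq_abs b]
      ring
    rw [mul_assoc (lam ^ 2 / √π), ← exp_add, hexp, exp_add, smul_eq_mul, hsqrt]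
    field_simp
  rw [← integral_Ioi_comp_const_mul_sq _ two_pos,
    setIntegral_congr_fun measurableSet_Ioi h_integrand, integral_const_mul,
    integral_exp_neg_sq_mul_sub_div hlam (by positivity)]
  field_simp
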